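/- Let n ≥ 2 and let G = G_1 × ⋯ × G_n be a direct product of finite groups such that every maximal subgroup M of G splits as a direct product M = M_1 × ⋯ × M_n with M_i ≤ G_i for every i. Then for every subgroup H = H_1 × ⋯ × H_n of G with H_i ≤ G_i for all i, one has μ_G(H) = ∏_{i=1}^n μ_{G_i}(H_i). -/

import Mathlib

open Classical in
/-- The Möbius function of a finite partial order with a top element:
`mob ⊤ = 1` and `mob x = -∑_{x < y ≤ ⊤} mob y` for `x ≠ ⊤`. -/
noncomputable def mob {α : Type*} [PartialOrder α] [OrderTop α] [Finite α] (x : α) : ℤ :=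
  if x = ⊤ then 1
  else - ∑ y ∈ (Set.toFinite {y : α | x < y}).toFinset.attach, mob y.1
termination_by (Set.toFinite {y : α | x < y}).toFinset.card
decreasing_by
  have hy : x < y.1 := by
    have h2 := y.2
    rwa [Set.Finite.mem_toFinset] at h2
  refine Finset.card_lt_card ?_
  rw [Finset.ssubset_iff_of_subset]
  · exact ⟨y.1, by rwa [Set.Finite.mem_toFinset], by simp [Set.Finite.mem_toFinset]⟩
  · intro z hz
    rw [Set.Finite.mem_toFinset] at hz ⊢
    exact hy.trans hz

section C

variable (G : Type*) [Group G]

instance subgroupFinite [Finite G] : Finite (Subgroup G) :=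
  Finite.of_injective (fun H => (H : Set G)) SetLike.coe_injective

/-- Type synonym for `Subgroup G`, endowed with the preorder `H ≼ K` iff
`H ≤ gKg⁻¹` for some `g : G`. -/
def CSub := Subgroup G

variable {G}

/-- Conversion from `Subgroup G` to the type synonym `CSub G`. -/
def CSub.mk (H : Subgroup G) : CSub G := H

/-- Conversion from the type synonym `CSub G` to `Subgroup G`. -/
def CSub.toSubgroup (H : CSub G) : Subgroup G := H

variable (G)

instance : Preorder (CSub G) where
  le H K := ∃ g : G, H.toSubgroup ≤ K.toSubgroup.map (MulAut.conj g).toMonoidHom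
  le_refl H := ⟨1, by
    simp only [map_one]
    rw [show MulEquiv.toMonoidHom (1 : MulAut G) = MonoidHom.id G from rfl, Subgroup.map_id]⟩
  le_trans H K L := by
    rintro ⟨g, hg⟩ ⟨h, hh⟩
    refine ⟨g * h, hg.trans ?_⟩
    have hm := Subgroup.map_mono (f := (MulAut.conj g).toMonoidHom) hh
    rw [Subgroup.map_map] at hm
    refine hm.trans (le_of_eq ?_)
    congr 1
    ext x
    simp [mul_assoc]

instance [Finite G] : Finite (CSub G) := subgroupFinite G

/-- The poset of conjugacy classes of subgroups of `G`: for a finite group this is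
the quotient of subgroups by conjugacy, with `[H] ≤ [K]` iff `H ≤ gKg⁻¹` for some `g ∈ G`. -/
abbrev ConjClassSub := Antisymmetrization (CSub G) (· ≤ ·)

/-- The conjugacy class of a subgroup, as an element of `ConjClassSub G`. -/
def conjClassOf (H : Subgroup G) : ConjClassSub G :=
  toAntisymmetrization (α := CSub G) (· ≤ ·) (CSub.mk H)

instance : OrderTop (ConjClassSub G) where
  top := conjClassOf G ⊤
  le_top c := by
    induction c using Quotient.ind with
    | _ H =>
      show toAntisymmetrization (α := CSub G) (· ≤ ·) H ≤
        toAntisymmetrization (α := CSub G) (· ≤ ·) (CSub.mk ⊤)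
      rw [toAntisymmetrization_le_toAntisymmetrization_iff]
      refine ⟨1, ?_⟩
      show H.toSubgroup ≤ Subgroup.map (MulAut.conj (1:G)).toMonoidHom (⊤ : Subgroup G)
      rw [Subgroup.map_top_of_surjective _ (MulAut.conj (1:G)).surjective]
      exact le_top

instance [Finite G] : Finite (ConjClassSub G) := Quotient.finite _

variable {G}

/-- The Möbius function `μ_G` on the subgroup lattice of the finite group `G`. -/
noncomputable def muSub [Finite G] (H : Subgroup G) : ℤ := mob H

/-- The Möbius function `λ_G` on the poset of conjugacy classes of subgroups of the
finite group `G`, evaluated at the class of `H`. -/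
noncomputable def lamSub [Finite G] (H : Subgroup G) : ℤ :=
  mob (conjClassOf G H)

/-- `G` satisfies the (μ,λ)-property if `μ_G(H) = [N_{G'}(H) : G' ∩ H] · λ_G(H)`
for every subgroup `H ≤ G`, where `G' = [G,G]` and `N_{G'}(H) = N_G(H) ∩ G'`. -/
def MuLambdaProperty (G : Type*) [Group G] [Finite G] : Prop :=
  ∀ H : Subgroup G,
    muSub H =
      ((commutator G ⊓ H).relIndex (Subgroup.normalizer (H : Set G) ⊓ commutator G) : ℤ) * lamSub H

/-- `MaxInt G` consists of `G` itself (the subgroup `⊤`) together with all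
intersections of nonempty families of maximal subgroups of `G`. -/
def MaxInt (G : Type*) [Group G] : Set (Subgroup G) :=
  {H | H = ⊤ ∨ ∃ S : Set (Subgroup G), S.Nonempty ∧ (∀ M ∈ S, IsCoatom M) ∧ H = sInf S}

end C

instance {n R : Type*} [DecidableEq n] [Fintype n] [CommRing R] [Finite R] :
    Finite (Matrix.SpecialLinearGroup n R) :=
  Finite.of_injective (fun A => (A : Matrix n n R)) Subtype.coe_injective

open scoped MatrixGroups


/-!
The subgroup lattice of `G = ∏ Gᵢ` maps onto the product of the subgroup lattices by
`K ↦ (πᵢ K)ᵢ`, with upper adjoint `(Hᵢ)ᵢ ↦ ∏ Hᵢ`. For any such Galois insertion `l ⊣ u`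
of finite posets in which only `⊤` is sent to `⊤`, the function equal to `μ(l K)` on the
image of `u` and to `0` elsewhere satisfies the defining recursion of `μ`, so `μ(u y) = μ(y)`.
The hypothesis on maximal subgroups is exactly what makes `⊤` the only subgroup whose
projections are all surjective. Finally, Möbius functions are multiplicative on products
of posets.
-/

open Finset

section Mobius

variable {α : Type*} [PartialOrder α] [Finite α]

theorem sum_Ici_eq_add_sum_Ioi {M : Type*} [AddCommMonoid M] (f : α → M) (x : α) :
    ∑ y ∈ (Set.Ici x).toFinite.toFinset, f y = f x + ∑ y ∈ (Set.Ioi x).toFinite.toFinset, f y := by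
  classical
  have hx : x ∉ (Set.Ioi x).toFinite.toFinset := by simp
  rw [← sum_insert hx]
  congr 1
  ext y
  simp [le_iff_lt_or_eq, eq_comm, or_comm]

variable [OrderTop α]

theorem mob_top : mob (⊤ : α) = 1 := by
  rw [mob, if_pos rfl]

theorem mob_of_ne_top {x : α} (hx : x ≠ ⊤) :
    mob x = -∑ y ∈ (Set.Ioi x).toFinite.toFinset, mob y := by
  rw [mob, if_neg hx, sum_attach]
  rfl

open Classical in
theorem sum_Ici_mob (x : α) :
    ∑ y ∈ (Set.Ici x).toFinite.toFinset, mob y = if x = ⊤ then 1 else 0 := by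
  rw [sum_Ici_eq_add_sum_Ioi]
  split_ifs with hx
  · subst hx
    have hempty : (Set.Ioi (⊤ : α)).toFinite.toFinset = ∅ := by simp
    rw [hempty, sum_empty, add_zero, mob_top]
  · rw [mob_of_ne_top hx, neg_add_cancel]

open Classical in
theorem eq_mob_of_sum_Ici {f : α → ℤ}
    (hf : ∀ x, ∑ y ∈ (Set.Ici x).toFinite.toFinset, f y = if x = ⊤ then 1 else 0) (x : α) :
    f x = mob x := by
  induction x using WellFoundedGT.induction with
  | _ x ih =>
    have hsum : ∑ y ∈ (Set.Ioi x).toFinite.toFinset, f y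
        = ∑ y ∈ (Set.Ioi x).toFinite.toFinset, mob y :=
      sum_congr rfl fun y hy => ih y (by simpa using hy)
    have hfx := hf x
    rw [← sum_Ici_mob x, sum_Ici_eq_add_sum_Ioi, sum_Ici_eq_add_sum_Ioi, hsum] at hfx
    exact add_right_cancel hfx

theorem mob_pi {ι : Type*} [Fintype ι] {β : ι → Type*} [∀ i, PartialOrder (β i)]
    [∀ i, OrderTop (β i)] [∀ i, Finite (β i)] (x : ∀ i, β i) :
    mob x = ∏ i, mob (x i) := by
  classical
  refine (eq_mob_of_sum_Ici (f := fun x => ∏ i, mob (x i)) (fun x => ?_) x).symm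
  have hIci : (Set.Ici x).toFinite.toFinset
      = Fintype.piFinset fun i => (Set.Ici (x i)).toFinite.toFinset := by
    ext y
    simp [Pi.le_def]
  simp only [hIci, ← prod_univ_sum, sum_Ici_mob, Fintype.prod_boole, funext_iff, Pi.top_apply]

variable {β : Type*} [PartialOrder β] [OrderTop β] [Finite β]

theorem GaloisInsertion.mob_u_eq {l : α → β} {u : β → α} (gi : GaloisInsertion l u)
    (hl : ∀ x, l x = ⊤ → x = ⊤) (y : β) : mob (u y) = mob y := by
  classical
  let f : α → ℤ := fun x => if u (l x) = x then mob (l x) else 0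
  have hf : ∀ x, ∑ z ∈ (Set.Ici x).toFinite.toFinset, f z = if x = ⊤ then 1 else 0 := by
    intro x
    have hreindex : ∑ z ∈ (Set.Ici x).toFinite.toFinset with u (l z) = z, mob (l z)
        = ∑ w ∈ (Set.Ici (l x)).toFinite.toFinset, mob w := by
      refine sum_nbij' l u (fun z hz => ?_) (fun w hw => ?_) (fun z hz => ?_)
        (fun w _ => gi.l_u_eq w) (fun _ _ => rfl)
      · simp only [mem_filter, Set.Finite.mem_toFinset, Set.mem_Ici] at hz ⊢
        exact gi.gc.monotone_l hz.1
      · simp only [mem_filter, Set.Finite.mem_toFinset, Set.mem_Ici] at hw ⊢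
        exact ⟨gi.gc.le_iff_le.mp hw, by rw [gi.l_u_eq]⟩
      · exact (mem_filter.mp hz).2
    have htop : l x = ⊤ ↔ x = ⊤ := ⟨hl x, fun h => h ▸ gi.l_top⟩
    rw [← sum_filter, hreindex, sum_Ici_mob, if_congr htop rfl rfl]
  rw [← eq_mob_of_sum_Ici hf]
  simp [f, gi.l_u_eq]

end Mobius

namespace Subgroup

variable {ι : Type*} {G : ι → Type*} [∀ i, Group (G i)]

def piGaloisInsertion :
    GaloisInsertion (fun K : Subgroup (∀ i, G i) => fun i => K.map (Pi.evalMonoidHom G i))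
      (pi Set.univ) := by
  classical
  refine GaloisConnection.toGaloisInsertion (fun K H => ?_) (fun H i x hx => ?_)
  · simp [Pi.le_def, map_le_iff_le_comap, le_pi_iff]
  · exact ⟨Pi.mulSingle i x, by simpa using hx, by simp⟩

theorem eq_top_of_forall_map_eval_eq_top [Finite (∀ i, G i)]
    (hmax : ∀ M : Subgroup (∀ i, G i), IsCoatom M → ∃ M' : ∀ i, Subgroup (G i), M = pi Set.univ M')
    {K : Subgroup (∀ i, G i)} (hK : ∀ i, K.map (Pi.evalMonoidHom G i) = ⊤) : K = ⊤ := by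
  by_contra hne
  obtain ⟨M, hM, hKM⟩ := (eq_top_or_exists_le_coatom K).resolve_left hne
  obtain ⟨M', rfl⟩ := hmax M hM
  have hle : (fun i => K.map (Pi.evalMonoidHom G i)) ≤ M' :=
    (piGaloisInsertion.gc.monotone_l hKM).trans (piGaloisInsertion.l_u_eq M').le
  have hM' : M' = ⊤ := top_le_iff.mp fun i => (hK i).ge.trans (hle i)
  exact hM.1 (by rw [hM']; exact pi_top _)

end Subgroup

theorem muSub_pi_general (n : ℕ) (G : Fin n → Type*) [∀ i, Group (G i)] [∀ i, Finite (G i)]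
    (hmax : ∀ M : Subgroup (∀ i, G i), IsCoatom M →
      ∃ M' : ∀ i, Subgroup (G i), M = Subgroup.pi Set.univ M')
    (H : ∀ i, Subgroup (G i)) :
    muSub (Subgroup.pi Set.univ H) = ∏ i, muSub (H i) := by
  have hreflect : ∀ K : Subgroup (∀ i, G i),
      (fun i => K.map (Pi.evalMonoidHom G i)) = ⊤ → K = ⊤ := fun K hK =>
    Subgroup.eq_top_of_forall_map_eval_eq_top hmax (funext_iff.mp hK)
  calc muSub (Subgroup.pi Set.univ H)
      = mob H := Subgroup.piGaloisInsertion.mob_u_eq hreflect H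
    _ = ∏ i, muSub (H i) := mob_pi H

/-- If every maximal subgroup of `G = ∏ Gᵢ` splits as a direct product, then the Möbius
function `μ` of a product subgroup is the product of the Möbius functions. -/
theorem muSub_pi (n : ℕ) (hn : 2 ≤ n) (G : Fin n → Type*) [∀ i, Group (G i)] [∀ i, Finite (G i)]
    (hmax : ∀ M : Subgroup (∀ i, G i), IsCoatom M →
      ∃ M' : ∀ i, Subgroup (G i), M = Subgroup.pi Set.univ M')
    (H : ∀ i, Subgroup (G i)) :
    muSub (Subgroup.pi Set.univ H) = ∏ i, muSub (H i) :=
  muSub_pi_general n G hmax H
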